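/- arXiv:math-ph/0307050 — 2 statements merged into one kernel-verified Lean document; each statement's English description precedes it below -/
import Mathlib

section
/- For all G₁, G₂ ∈ B_bs(Γ₀), one has G₁ ⋆ G₂ ∈ B_bs(Γ₀) and K(G₁ ⋆ G₂) = (KG₁) · (KG₂) as functions on Γ. -/
open MeasureTheory
open scoped BigOperators ENNReal Classical

noncomputable section

/-- The one-particle space `ℝ^d`. -/
abbrev Rd (d : ℕ) : Type := Fin d → ℝ

/-- The configuration space `Γ`: all locally finite subsets of `ℝ^d`. -/
def Config (d : ℕ) : Type :=
  {γ : Set (Rd d) // ∀ K : Set (Rd d), IsCompact K → (γ ∩ K).Finite}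

variable {d : ℕ}

namespace Config

/-- `γ ∪ {x}`. -/
def insertPt (γ : Config d) (x : Rd d) : Config d :=
  ⟨insert x γ.1, fun K hK => ((γ.2 K hK).insert x).subset (by
      rintro y ⟨hy, hyK⟩
      rcases Set.mem_insert_iff.mp hy with h | h
      · exact Set.mem_insert_iff.mpr (Or.inl h)
      · exact Set.mem_insert_iff.mpr (Or.inr ⟨h, hyK⟩))⟩

/-- `γ ∖ {x}`. -/
def erasePt (γ : Config d) (x : Rd d) : Config d :=
  ⟨γ.1 \ {x}, fun K hK => (γ.2 K hK).subset (fun _ hy => ⟨hy.1.1, hy.2⟩)⟩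

/-- A finite configuration, viewed as an element of `Γ`. -/
def ofFinset (η : Finset (Rd d)) : Config d :=
  ⟨(η : Set (Rd d)), fun _ _ => η.finite_toSet.subset Set.inter_subset_left⟩

/-- The local restriction `γ_Λ := γ ∩ Λ`. -/
def restrict (γ : Config d) (Λ : Set (Rd d)) : Config d :=
  ⟨γ.1 ∩ Λ, fun K hK => (γ.2 K hK).subset (fun _ hy => ⟨hy.1.1, hy.2⟩)⟩

end Config

/-- The σ-algebra on the space `Γ₀` of finite configurations, generated by the
counting maps `η ↦ |η ∩ A|`, `A` measurable. -/
instance : MeasurableSpace (Finset (Rd d)) :=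
  MeasurableSpace.generateFrom
    {S | ∃ (A : Set (Rd d)) (n : ℕ), MeasurableSet A ∧
      S = {η : Finset (Rd d) | ((η : Set (Rd d)) ∩ A).ncard = n}}

/-- The Borel σ-algebra on `Γ`, generated by the counting maps `γ ↦ |γ ∩ A|`. -/
instance : MeasurableSpace (Config d) :=
  MeasurableSpace.generateFrom
    {S | ∃ (A : Set (Rd d)) (n : ℕ), MeasurableSet A ∧
      S = {γ : Config d | (γ.1 ∩ A).ncard = n}}

/-- The Lebesgue–Poisson measure `λ_z = Σ_n (zⁿ/n!) m⁽ⁿ⁾` on `Γ₀`, where `m⁽ⁿ⁾` is the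
image of Lebesgue measure on `(ℝ^d)ⁿ` under `(x₁,…,xₙ) ↦ {x₁,…,xₙ}`. -/
def lambdaLP (d : ℕ) (z : ℝ) : Measure (Finset (Rd d)) :=
  Measure.sum fun n : ℕ =>
    (ENNReal.ofReal (z ^ n / n.factorial)) •
      Measure.map (fun x : Fin n → Rd d => Finset.image x Finset.univ) volume

/-- The `⋆`-convolution `(G₁ ⋆ G₂)(η) = Σ_{(η₁,η₂,η₃)∈P₃(η)} G₁(η₁∪η₂) G₂(η₂∪η₃)`,
the sum running over all ordered partitions of `η` into three (possibly empty) parts. -/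
def starConv {M : Type*} [NonUnitalNonAssocSemiring M]
    (G₁ G₂ : Finset (Rd d) → M) (η : Finset (Rd d)) : M :=
  ∑ η₁ ∈ η.powerset, ∑ η₂ ∈ (η \ η₁).powerset,
    G₁ (η₁ ∪ η₂) * G₂ (η₂ ∪ ((η \ η₁) \ η₂))

/-- The `K`-transform `(KG)(γ) = Σ_{η ⋐ γ} G(η)`. -/
def Ktrans {M : Type*} [AddCommMonoid M] [TopologicalSpace M]
    (G : Finset (Rd d) → M) (γ : Config d) : M :=
  ∑' η : {η : Finset (Rd d) // (η : Set (Rd d)) ⊆ γ.1}, G η.1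

/-- `B_bs(Γ₀)`: bounded measurable functions on `Γ₀` with bounded support. -/
def BddSupp (G : Finset (Rd d) → ℝ) : Prop :=
  Measurable G ∧ ∃ (L : ℝ) (N : ℕ) (Λ : Set (Rd d)), IsCompact Λ ∧
    (∀ η, |G η| ≤ L) ∧
    (∀ η : Finset (Rd d), ¬((η : Set (Rd d)) ⊆ Λ ∧ η.card ≤ N) → G η = 0)

/-- A pair potential `φ : ℝ^d → ℝ ∪ {+∞}`, symmetric and real-valued away from `0`. -/
structure PairPotential (d : ℕ) where
  toFun : Rd d → EReal
  measurable' : Measurable toFun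
  symm' : ∀ x, toFun (-x) = toFun x
  finite_off_zero' : ∀ x, x ≠ 0 → toFun x ≠ ⊤
  ne_bot' : ∀ x, toFun x ≠ ⊥

/-- `e^{-a}` for `a ∈ ℝ ∪ {+∞}`, with `e^{-∞} := 0`. -/
def expNegE (a : EReal) : ℝ :=
  if a = ⊤ then 0 else Real.exp (-a.toReal)

/-- The energy `E(η) = Σ_{{x,y}⊂η} φ(x-y)` of a finite configuration. -/
def pairEnergy (V : PairPotential d) (η : Finset (Rd d)) : ℝ :=
  (1 / 2) * ∑ x ∈ η, ∑ y ∈ η.erase x, (V.toFun (x - y)).toReal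

/-- Stability (S): `E(η) ≥ -B|η|` for all finite configurations `η`. -/
def Stable (V : PairPotential d) (B : ℝ) : Prop :=
  0 ≤ B ∧ ∀ η : Finset (Rd d), -B * η.card ≤ pairEnergy V η

/-- Integrability (I): `∫ |1 - e^{-φ(x)}| dx < ∞`. -/
def CondI (V : PairPotential d) : Prop :=
  ∫⁻ x : Rd d, ENNReal.ofReal |1 - expNegE (V.toFun x)| < ⊤

/-- Lower regularity (LR): the interaction energy between two disjoint finite
configurations is bounded below by `-Σ a(x-y)` for some nonnegative integrable `a`. -/
def LowerRegular (V : PairPotential d) : Prop :=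
  ∃ a : Rd d → ℝ, Measurable a ∧ (∀ x, 0 ≤ a x) ∧
    (∫⁻ x : Rd d, ENNReal.ofReal (a x) < ⊤) ∧
    ∀ η₁ η₂ : Finset (Rd d), Disjoint η₁ η₂ →
      -(∑ x ∈ η₁, ∑ y ∈ η₂, a (x - y)) ≤ ∑ x ∈ η₁, ∑ y ∈ η₂, (V.toFun (x - y)).toReal

/-- The relative energy `E(x,η) = Σ_{y∈η} φ(x-y)` of a point w.r.t. a finite
configuration, with values in `ℝ ∪ {±∞}`. -/
def relEnergyF (V : PairPotential d) (x : Rd d) (η : Finset (Rd d)) : EReal :=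
  ∑ y ∈ η, V.toFun (x - y)

/-- `e^{-E(x,γ)}` for a general (possibly infinite) configuration `γ`: if the series
`Σ_{y∈γ} φ(x-y)` is (absolutely) convergent this is the exponential of minus its sum,
and otherwise `E(x,γ) := +∞`, i.e. `e^{-E(x,γ)} := 0`. -/
def expNegRelEnergy (V : PairPotential d) (x : Rd d) (γ : Set (Rd d)) : ℝ :=
  if (∀ y ∈ γ, V.toFun (x - y) ≠ ⊤) ∧
      Summable (fun y : γ => |(V.toFun (x - (y : Rd d))).toReal|)
  then Real.exp (-∑' y : γ, (V.toFun (x - (y : Rd d))).toReal)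
  else 0

/-- The Glauber generator:
`(HF)(γ) = -Σ_{x∈γ}(F(γ∖{x})-F(γ)) - z ∫ e^{-E(x,γ)} (F(γ∪{x})-F(γ)) dx`. -/
def glauber (V : PairPotential d) (z : ℝ) (F : Config d → ℝ) (γ : Config d) : ℝ :=
  -((∑' x : γ.1, (F (γ.erasePt x) - F γ)) +
    z * ∫ x : Rd d, expNegRelEnergy V x γ.1 * (F (γ.insertPt x) - F γ))

/-- `Ĥ := K⁻¹ H K` on quasi-observables, via `(K⁻¹F)(η) = Σ_{ξ⊂η} (-1)^{|η∖ξ|} F(ξ)`. -/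
def hatH (V : PairPotential d) (z : ℝ) (G : Finset (Rd d) → ℝ)
    (η : Finset (Rd d)) : ℝ :=
  ∑ ξ ∈ η.powerset, (-1 : ℝ) ^ (η.card - ξ.card) *
    glauber V z (Ktrans G) (Config.ofFinset ξ)

/-- `M¹_fm(Γ)`: probability measures on `Γ` with finite local moments of all orders. -/
def HasFiniteLocalMoments (μ : Measure (Config d)) : Prop :=
  IsProbabilityMeasure μ ∧ ∀ (n : ℕ) (Λ : Set (Rd d)), IsCompact Λ →
    ∫⁻ γ : Config d, ((γ.1 ∩ Λ).ncard : ℝ≥0∞) ^ n ∂μ < ⊤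

/-- `ρ = K*μ` is the correlation measure of `μ`:
`∫_{Γ₀} G dρ = ∫_Γ (KG) dμ` for every positive measurable `G` with bounded support. -/
def IsCorrelationMeasure (μ : Measure (Config d)) (ρ : Measure (Finset (Rd d))) : Prop :=
  ∀ G : Finset (Rd d) → ℝ≥0∞, Measurable G →
    (∃ (N : ℕ) (Λ : Set (Rd d)), IsCompact Λ ∧
      ∀ η : Finset (Rd d), ¬((η : Set (Rd d)) ⊆ Λ ∧ η.card ≤ N) → G η = 0) →
    ∫⁻ η, G η ∂ρ =
      ∫⁻ γ, (∑' η : {η : Finset (Rd d) // (η : Set (Rd d)) ⊆ γ.1}, G η.1) ∂μ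

/-- The Georgii–Nguyen–Zessin characterization: `μ` is a Gibbs measure for the pair
potential `φ` and activity `z`. -/
def IsGibbs (V : PairPotential d) (z : ℝ) (μ : Measure (Config d)) : Prop :=
  ∀ H : Rd d → Config d → ℝ≥0∞, Measurable (Function.uncurry H) →
    ∫⁻ γ, ∑' x : γ.1, H x γ ∂μ =
      ENNReal.ofReal z *
        ∫⁻ γ, ∫⁻ x, H x (γ.insertPt x) *
          ENNReal.ofReal (expNegRelEnergy V x γ.1) ∂(volume : Measure (Rd d)) ∂μ

/-- The Kirkwood–Salsburg equation for a correlation function `k`. -/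
def SatisfiesKS (V : PairPotential d) (z : ℝ) (k : Finset (Rd d) → ℝ) : Prop :=
  ∀ᵐ p ∂((lambdaLP d z).prod (volume : Measure (Rd d))),
    k (insert p.2 p.1) =
      expNegE (relEnergyF V p.2 p.1) *
        ∫ ρ, (∏ y ∈ ρ, (expNegE (V.toFun (p.2 - y)) - 1)) * k (p.1 ∪ ρ) ∂(lambdaLP d z)

end
/-- `B_bs(Γ₀)` for complex-valued functions. -/
def BddSuppC {d : ℕ} (G : Finset (Rd d) → ℂ) : Prop :=
  Measurable G ∧ ∃ (L : ℝ) (N : ℕ) (Λ : Set (Rd d)), IsCompact Λ ∧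
    (∀ η, ‖G η‖ ≤ L) ∧
    (∀ η : Finset (Rd d), ¬((η : Set (Rd d)) ⊆ Λ ∧ η.card ≤ N) → G η = 0)

/-!
Writing `(G₁ ⋆ G₂)(η)` as the sum of `G₁(A) G₂(B)` over the pairs with `A ∪ B = η`, every pair
of subsets of a finite set `T` occurs for exactly one `η ⊆ T`, so
`Σ_{η ⊆ T} (G₁ ⋆ G₂)(η) = (Σ_{A ⊆ T} G₁(A)) (Σ_{B ⊆ T} G₂(B))`. If the supports lie in a compact
`Λ`, then `KG(γ)` is exactly such a sum with `T = γ ∩ Λ`, which is finite by local finiteness.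
The same formula gives the support and the bound of `G₁ ⋆ G₂`.

Measurability is the delicate part, since the σ-algebra of `Γ₀` is only generated by the counting
maps. The sets invariant under swapping two points of the same cell of a finite measurable
partition form a generating π-system; such sets depend only on the cell counts, hence are
measurable, and `⋆` preserves swap invariance because it commutes with permutations of `ℝ^d`.
A monotone class argument in each argument extends this to all measurable `G₁`, `G₂`.
-/

open Filter Topology TopologicalSpace

theorem tendsto_indicator_biUnion_range {α β : Type*} [Zero β] [TopologicalSpace β]
    (f : ℕ → Set α) (g : α → β) (x : α) :
    Tendsto (fun n => (⋃ i ∈ Finset.range n, f i).indicator g x) atTop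
      (𝓝 ((⋃ i, f i).indicator g x)) := by
  refine tendsto_nhds_of_eventually_eq ?_
  by_cases hx : x ∈ ⋃ i, f i
  · obtain ⟨i, hi⟩ := Set.mem_iUnion.mp hx
    filter_upwards [eventually_gt_atTop i] with n hn
    have : x ∈ ⋃ i ∈ Finset.range n, f i := Set.mem_biUnion (Finset.mem_range.mpr hn) hi
    rw [Set.indicator_of_mem this, Set.indicator_of_mem hx]
  · refine Eventually.of_forall fun n => ?_
    have : x ∉ ⋃ i ∈ Finset.range n, f i := fun h => by
      obtain ⟨i, -, hi⟩ := Set.mem_iUnion₂.mp h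
      exact hx (Set.mem_iUnion_of_mem i hi)
    rw [Set.indicator_of_notMem this, Set.indicator_of_notMem hx]

section MonotoneClass

variable {α E : Type*} [m : MeasurableSpace α] [AddGroup E] [TopologicalSpace E]
  {C : Set (Set α)} {P : (α → E) → Prop}

theorem MeasurableSet.indicator_induction_on_inter (h_eq : m = MeasurableSpace.generateFrom C)
    (hC : IsPiSystem C) (huniv : Set.univ ∈ C) (hind : ∀ s ∈ C, ∀ c, P (s.indicator fun _ => c))
    (hadd : ∀ f g, P f → P g → P (f + g))
    (hlim : ∀ (f : ℕ → α → E) g, (∀ n, P (f n)) → (∀ x, Tendsto (f · x) atTop (𝓝 (g x))) → P g)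
    {s : Set α} (hs : MeasurableSet s) (c : E) : P (s.indicator fun _ => c) := by
  have hzero : P fun _ => 0 := by simpa using hind _ huniv 0
  induction s, hs using MeasurableSpace.induction_on_inter h_eq hC generalizing c with
  | empty => simpa using hzero
  | basic s hs => exact hind s hs c
  | compl s _ ih =>
    have : sᶜ.indicator (fun _ => c) =
        Set.univ.indicator (fun _ => c) + s.indicator fun _ => -c := by
      ext x; by_cases hx : x ∈ s <;> simp [hx]
    exact this ▸ hadd _ _ (hind _ huniv c) (ih (-c))
  | iUnion f hdisj _ ih =>
    have hpartial : ∀ n, P ((⋃ i ∈ Finset.range n, f i).indicator fun _ => c) := by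
      intro n
      induction n with
      | zero => simpa using hzero
      | succ n ihn =>
        rw [Finset.range_add_one, Finset.set_biUnion_insert, Set.union_comm,
          Set.indicator_union_of_disjoint]
        · exact hadd _ _ ihn (ih n c)
        · exact Set.disjoint_iUnion₂_left.mpr fun i hi => hdisj (Finset.mem_range.mp hi).ne
    exact hlim _ _ hpartial (tendsto_indicator_biUnion_range f _)

theorem Measurable.induction_on_inter [MeasurableSpace E] [OpensMeasurableSpace E]
    [PseudoMetrizableSpace E] [SecondCountableTopology E]
    (h_eq : m = MeasurableSpace.generateFrom C)
    (hC : IsPiSystem C) (huniv : Set.univ ∈ C) (hind : ∀ s ∈ C, ∀ c, P (s.indicator fun _ => c))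
    (hadd : ∀ f g, P f → P g → P (f + g))
    (hlim : ∀ (f : ℕ → α → E) g, (∀ n, P (f n)) → (∀ x, Tendsto (f · x) atTop (𝓝 (g x))) → P g)
    {f : α → E} (hf : Measurable f) : P f :=
  StronglyMeasurable.induction (P := fun f _ => P f)
    (fun c _ hs => hs.indicator_induction_on_inter h_eq hC huniv hind hadd hlim c)
    (fun f g _ _ _ _ hf hg => hadd f g hf hg) (fun f g _ _ hf hfg => hlim f g hf hfg)
    f hf.stronglyMeasurable

end MonotoneClass

section StarConv

variable {d : ℕ} {M : Type*}

theorem starConv_eq_sum_union [NonUnitalNonAssocSemiring M] (u v : Finset (Rd d) → M)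
    {η T : Finset (Rd d)} (hηT : η ⊆ T) :
    starConv u v η =
      ∑ A ∈ T.powerset, ∑ B ∈ T.powerset, if A ∪ B = η then u A * v B else 0 := by
  rw [starConv, Finset.sum_sigma', ← Finset.sum_product', ← Finset.sum_filter]
  -- `(η₁, η₂, η₃) ↦ (η₁ ∪ η₂, η₂ ∪ η₃)`, with inverse `(A, B) ↦ (A \ B, A ∩ B, B \ A)`
  refine Finset.sum_nbij' (fun q => (q.1 ∪ q.2, η \ q.1)) (fun p => ⟨η \ p.2, p.1 ∩ p.2⟩)
    ?_ ?_ ?_ ?_ fun q hq => ?_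
  rotate_right
  · rw [Finset.union_sdiff_of_subset (Finset.mem_powerset.mp (Finset.mem_sigma.mp hq).2)]
  all_goals
    rintro ⟨_, _⟩ h
    simp only [Finset.mem_sigma, Finset.mem_filter, Finset.mem_product, Finset.mem_powerset,
      Finset.subset_iff, Finset.ext_iff, Sigma.mk.injEq, heq_eq_eq, Prod.mk.injEq,
      Finset.mem_union, Finset.mem_sdiff, Finset.mem_inter] at h hηT ⊢
    grind

theorem exists_union_eq_of_starConv_ne_zero [NonUnitalNonAssocSemiring M]
    {u v : Finset (Rd d) → M} {η : Finset (Rd d)} (h : starConv u v η ≠ 0) :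
    ∃ A B, A ∪ B = η ∧ u A ≠ 0 ∧ v B ≠ 0 := by
  rw [starConv_eq_sum_union u v subset_rfl] at h
  obtain ⟨A, -, hA⟩ := Finset.exists_ne_zero_of_sum_ne_zero h
  obtain ⟨B, -, hB⟩ := Finset.exists_ne_zero_of_sum_ne_zero hA
  obtain ⟨hAB, huv⟩ := ite_ne_right_iff.mp hB
  exact ⟨A, B, hAB, left_ne_zero_of_mul huv, right_ne_zero_of_mul huv⟩

theorem starConv_add_left [NonUnitalNonAssocSemiring M] (u u' v : Finset (Rd d) → M) :
    starConv (u + u') v = starConv u v + starConv u' v := by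
  ext η
  simp only [starConv, Pi.add_apply, add_mul, Finset.sum_add_distrib]

theorem starConv_add_right [NonUnitalNonAssocSemiring M] (u v v' : Finset (Rd d) → M) :
    starConv u (v + v') = starConv u v + starConv u v' := by
  ext η
  simp only [starConv, Pi.add_apply, mul_add, Finset.sum_add_distrib]

theorem tendsto_starConv [NonUnitalNonAssocSemiring M] [TopologicalSpace M]
    [IsTopologicalSemiring M] {ι : Type*} {l : Filter ι} {u v : ι → Finset (Rd d) → M}
    {u₀ v₀ : Finset (Rd d) → M} (hu : ∀ ξ, Tendsto (u · ξ) l (𝓝 (u₀ ξ)))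
    (hv : ∀ ξ, Tendsto (v · ξ) l (𝓝 (v₀ ξ))) (η : Finset (Rd d)) :
    Tendsto (fun i => starConv (u i) (v i) η) l (𝓝 (starConv u₀ v₀ η)) :=
  tendsto_finsetSum _ fun _ _ => tendsto_finsetSum _ fun _ _ => (hu _).mul (hv _)

theorem starConv_image_perm [NonUnitalNonAssocSemiring M] (u v : Finset (Rd d) → M)
    (e : Equiv.Perm (Rd d)) (η : Finset (Rd d)) :
    starConv u v (η.image e) =
      starConv (fun ξ => u (ξ.image e)) (fun ξ => v (ξ.image e)) η := by
  have hinj : Set.InjOn (fun ξ : Finset (Rd d) => ξ.image e) (η.powerset : Set _) :=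
    Finset.image_injOn_powerset_of_injOn e.injective.injOn
  simp only [starConv_eq_sum_union _ _ subset_rfl, Finset.powerset_image,
    Finset.sum_image hinj, ← Finset.image_union, (Finset.image_injective e.injective).eq_iff]

theorem sum_powerset_starConv [NonUnitalNonAssocSemiring M] (u v : Finset (Rd d) → M)
    (T : Finset (Rd d)) :
    ∑ η ∈ T.powerset, starConv u v η = (∑ A ∈ T.powerset, u A) * ∑ B ∈ T.powerset, v B := by
  calc ∑ η ∈ T.powerset, starConv u v η
      = ∑ η ∈ T.powerset, ∑ A ∈ T.powerset, ∑ B ∈ T.powerset,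
          if A ∪ B = η then u A * v B else 0 :=
        Finset.sum_congr rfl fun η hη => starConv_eq_sum_union u v (Finset.mem_powerset.mp hη)
    _ = ∑ A ∈ T.powerset, ∑ B ∈ T.powerset, ∑ η ∈ T.powerset,
          if A ∪ B = η then u A * v B else 0 := by
        rw [Finset.sum_comm]
        exact Finset.sum_congr rfl fun _ _ => Finset.sum_comm
    _ = _ := by
        rw [Finset.sum_mul_sum]
        refine Finset.sum_congr rfl fun A hA => Finset.sum_congr rfl fun B hB => ?_
        rw [Finset.sum_ite_eq, if_pos]
        exact Finset.mem_powerset.mpr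
          (Finset.union_subset (Finset.mem_powerset.mp hA) (Finset.mem_powerset.mp hB))

theorem norm_starConv_le [NonUnitalSeminormedRing M] {u v : Finset (Rd d) → M} {L₁ L₂ : ℝ}
    (hu : ∀ ξ, ‖u ξ‖ ≤ L₁) (hv : ∀ ξ, ‖v ξ‖ ≤ L₂) (η : Finset (Rd d)) :
    ‖starConv u v η‖ ≤ 4 ^ η.card * (L₁ * L₂) := by
  have hL₁ : 0 ≤ L₁ := (norm_nonneg _).trans (hu ∅)
  have hL₂ : 0 ≤ L₂ := (norm_nonneg _).trans (hv ∅)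
  have hterm : ∀ A B : Finset (Rd d), ‖if A ∪ B = η then u A * v B else 0‖ ≤ L₁ * L₂ := by
    intro A B
    split_ifs
    · exact (norm_mul_le _ _).trans (mul_le_mul (hu A) (hv B) (norm_nonneg _) hL₁)
    · simpa using mul_nonneg hL₁ hL₂
  rw [starConv_eq_sum_union u v subset_rfl]
  refine (norm_sum_le_of_le _ fun A _ => norm_sum_le_of_le _ fun B _ => hterm A B).trans_eq ?_
  simp only [Finset.sum_const, Finset.card_powerset, nsmul_eq_mul, Nat.cast_pow, ← mul_assoc,
    ← mul_pow]
  norm_num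

end StarConv

section CellCounts

variable {d : ℕ} {κ : Type*}

noncomputable def cellCounts (c : Rd d → κ) (η : Finset (Rd d)) : κ → ℕ :=
  fun k => (η.filter (c · = k)).card

def SwapInvariant {β : Sort*} (c : Rd d → κ) (F : Finset (Rd d) → β) : Prop :=
  ∀ x y, c x = c y → ∀ η, F (η.image (Equiv.swap x y)) = F η

theorem apply_swap_apply_of_eq (c : Rd d → κ) {x y : Rd d} (h : c x = c y) (z : Rd d) :
    c (Equiv.swap x y z) = c z := by
  rw [Equiv.swap_apply_def]
  split_ifs <;> simp_all

theorem cellCounts_image_swap (c : Rd d → κ) {x y : Rd d} (h : c x = c y) (η : Finset (Rd d)) :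
    cellCounts c (η.image (Equiv.swap x y)) = cellCounts c η := by
  ext k
  rw [cellCounts, Finset.filter_image, Finset.card_image_of_injective _ (Equiv.injective _)]
  simp only [cellCounts, apply_swap_apply_of_eq c h]

theorem exists_mem_sdiff_of_cellCounts_eq {c : Rd d → κ} {η η' : Finset (Rd d)}
    (h : cellCounts c η = cellCounts c η') {x : Rd d} (hx : x ∈ η \ η') :
    ∃ y ∈ η' \ η, c y = c x := by
  by_contra! hne
  have hsub : η'.filter (c · = c x) ⊂ η.filter (c · = c x) := by
    refine Finset.ssubset_iff_of_subset (fun y hy => ?_) |>.mpr ⟨x, ?_, ?_⟩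
    · rw [Finset.mem_filter] at hy ⊢
      by_contra hyη
      exact hne y (Finset.mem_sdiff.mpr ⟨hy.1, fun h' => hyη ⟨h', hy.2⟩⟩) hy.2
    · exact Finset.mem_filter.mpr ⟨(Finset.mem_sdiff.mp hx).1, rfl⟩
    · exact fun h' => (Finset.mem_sdiff.mp hx).2 (Finset.mem_filter.mp h').1
  exact (Finset.card_lt_card hsub).ne (congrFun h (c x)).symm

/-- Swapping a point of `η \ η'` with a point of `η' \ η` in the same cell decreases
`|η \ η'|`. -/
theorem SwapInvariant.eq_of_cellCounts_eq {β : Sort*} {c : Rd d → κ} {F : Finset (Rd d) → β}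
    (hF : SwapInvariant c F) {η η' : Finset (Rd d)} (h : cellCounts c η = cellCounts c η') :
    F η = F η' := by
  by_cases hsub : η ⊆ η'
  · suffices η' ⊆ η by rw [Finset.Subset.antisymm hsub this]
    intro y hy
    by_contra hyη
    obtain ⟨z, hz, -⟩ := exists_mem_sdiff_of_cellCounts_eq h.symm (Finset.mem_sdiff.mpr ⟨hy, hyη⟩)
    exact (Finset.mem_sdiff.mp hz).2 (hsub (Finset.mem_sdiff.mp hz).1)
  obtain ⟨x, hxη, hxη'⟩ := Finset.not_subset.mp hsub
  obtain ⟨y, hy, hyx⟩ := exists_mem_sdiff_of_cellCounts_eq h (Finset.mem_sdiff.mpr ⟨hxη, hxη'⟩)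
  have hswap := hF x y hyx.symm η
  have hcount : cellCounts c (η.image (Equiv.swap x y)) = cellCounts c η' :=
    (cellCounts_image_swap c hyx.symm η).trans h
  have hdecr : (η.image (Equiv.swap x y) \ η').card < (η \ η').card := by
    refine Finset.card_lt_card (Finset.ssubset_iff_of_subset ?_ |>.mpr
      ⟨x, Finset.mem_sdiff.mpr ⟨hxη, hxη'⟩, ?_⟩)
    · intro z hz
      simp only [Finset.mem_sdiff, Finset.mem_image] at hz hy ⊢
      obtain ⟨⟨w, hw, rfl⟩, hz'⟩ := hz
      rw [Equiv.swap_apply_def] at hz' ⊢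
      split_ifs at hz' ⊢ <;> grind
    · simp only [Finset.mem_sdiff, Finset.mem_image, not_and, not_not]
      rintro ⟨w, hw, hwx⟩
      rw [Equiv.swap_apply_eq_iff, Equiv.swap_apply_left] at hwx
      exact absurd (hwx ▸ hw) (Finset.mem_sdiff.mp hy).2
  exact hswap.symm.trans (hF.eq_of_cellCounts_eq hcount)
termination_by (η \ η').card

theorem SwapInvariant.mono {β : Sort*} {κ' : Type*} {c : Rd d → κ} {c' : Rd d → κ'}
    {F : Finset (Rd d) → β} (hF : SwapInvariant c F) (h : ∀ x y, c' x = c' y → c x = c y) :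
    SwapInvariant c' F :=
  fun x y hxy => hF x y (h x y hxy)

theorem SwapInvariant.indicator {β : Type*} [Zero β] {c : Rd d → κ} {S : Set (Finset (Rd d))}
    (hS : SwapInvariant c (· ∈ S)) (b : β) : SwapInvariant c (S.indicator fun _ => b) := by
  intro x y hxy η
  simp only [Set.indicator_apply, hS x y hxy η]

theorem SwapInvariant.starConv {M : Type*} [NonUnitalNonAssocSemiring M] {c : Rd d → κ}
    {u v : Finset (Rd d) → M} (hu : SwapInvariant c u) (hv : SwapInvariant c v) :
    SwapInvariant c (starConv u v) := by
  intro x y hxy η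
  rw [starConv_image_perm]
  simp only [hu x y hxy, hv x y hxy]

theorem ncard_coe_inter (η : Finset (Rd d)) (A : Set (Rd d)) :
    ((η : Set (Rd d)) ∩ A).ncard = (η.filter (· ∈ A)).card := by
  rw [← Set.ncard_coe_finset, Finset.coe_filter]
  rfl

theorem measurable_card_filter_mem {A : Set (Rd d)} (hA : MeasurableSet A) :
    Measurable fun η : Finset (Rd d) => (η.filter (· ∈ A)).card :=
  measurable_to_countable' fun n => MeasurableSpace.measurableSet_generateFrom
    ⟨A, n, hA, by simp only [ncard_coe_inter]; rfl⟩

theorem measurable_cellCounts {c : Rd d → κ} (hc : ∀ k, MeasurableSet (c ⁻¹' {k})) :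
    Measurable (cellCounts c) :=
  measurable_pi_lambda _ fun k => measurable_card_filter_mem (hc k)

theorem SwapInvariant.measurable [Finite κ] {β : Type*} [MeasurableSpace β] {c : Rd d → κ}
    (hc : ∀ k, MeasurableSet (c ⁻¹' {k})) {F : Finset (Rd d) → β} (hF : SwapInvariant c F) :
    Measurable F := by
  have hfac : Function.FactorsThrough F (cellCounts c) := fun _ _ h => hF.eq_of_cellCounts_eq h
  have : F = Function.extend (cellCounts c) F (fun _ => F ∅) ∘ cellCounts c :=
    funext fun η => (hfac.extend_apply _ η).symm
  rw [this]
  exact (measurable_of_countable _).comp (measurable_cellCounts hc)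

end CellCounts

section CellInvariant

variable {d : ℕ}

def IsCellInvariant (S : Set (Finset (Rd d))) : Prop :=
  ∃ (κ : Type) (c : Rd d → κ), Finite κ ∧ (∀ k, MeasurableSet (c ⁻¹' {k})) ∧
    SwapInvariant c (· ∈ S)

theorem IsCellInvariant.measurableSet {S : Set (Finset (Rd d))} (hS : IsCellInvariant S) :
    MeasurableSet S := by
  obtain ⟨κ, c, _, hc, hSc⟩ := hS
  exact measurableSet_setOfPred.mpr (hSc.measurable hc)

theorem isCellInvariant_univ : IsCellInvariant (Set.univ : Set (Finset (Rd d))) :=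
  ⟨Unit, fun _ => (), inferInstance, fun _ => by simp, fun _ _ _ _ => rfl⟩

theorem IsCellInvariant.exists_common {S T : Set (Finset (Rd d))} (hS : IsCellInvariant S)
    (hT : IsCellInvariant T) :
    ∃ (κ : Type) (c : Rd d → κ), Finite κ ∧ (∀ k, MeasurableSet (c ⁻¹' {k})) ∧
      SwapInvariant c (· ∈ S) ∧ SwapInvariant c (· ∈ T) := by
  obtain ⟨κ₁, c₁, _, hc₁, hS⟩ := hS
  obtain ⟨κ₂, c₂, _, hc₂, hT⟩ := hT
  refine ⟨κ₁ × κ₂, fun x => (c₁ x, c₂ x), inferInstance, fun k => ?_,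
    hS.mono fun _ _ h => congrArg Prod.fst h, hT.mono fun _ _ h => congrArg Prod.snd h⟩
  have : (fun x => (c₁ x, c₂ x)) ⁻¹' {k} = c₁ ⁻¹' {k.1} ∩ c₂ ⁻¹' {k.2} := by
    ext x; simp [Prod.ext_iff]
  exact this ▸ (hc₁ k.1).inter (hc₂ k.2)

theorem isPiSystem_isCellInvariant : IsPiSystem {S : Set (Finset (Rd d)) | IsCellInvariant S} := by
  intro S hS T hT _
  obtain ⟨κ, c, hκ, hc, hSc, hTc⟩ := IsCellInvariant.exists_common hS hT
  exact ⟨κ, c, hκ, hc, fun x y hxy η => by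
    simp only [Set.mem_inter_iff, hSc x y hxy η, hTc x y hxy η]⟩

theorem isCellInvariant_ncard_eq {A : Set (Rd d)} (hA : MeasurableSet A) (n : ℕ) :
    IsCellInvariant {η : Finset (Rd d) | ((η : Set (Rd d)) ∩ A).ncard = n} := by
  refine ⟨Bool, fun x => decide (x ∈ A), inferInstance, fun b => ?_, fun x y hxy η => ?_⟩
  · cases b
    · convert hA.compl using 1; ext x; simp
    · convert hA using 1; ext x; simp
  · have h := congrFun (cellCounts_image_swap (fun x => decide (x ∈ A)) hxy η) true
    simp only [cellCounts, decide_eq_true_eq] at h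
    simp only [Set.mem_ofPred_eq, ncard_coe_inter, h]

theorem measurableSpace_eq_generateFrom_isCellInvariant :
    (inferInstance : MeasurableSpace (Finset (Rd d))) =
      MeasurableSpace.generateFrom {S | IsCellInvariant S} := by
  refine le_antisymm (MeasurableSpace.generateFrom_le ?_) (MeasurableSpace.generateFrom_le ?_)
  · rintro _ ⟨A, n, hA, rfl⟩
    exact MeasurableSpace.measurableSet_generateFrom (isCellInvariant_ncard_eq hA n)
  · exact fun S hS => hS.measurableSet

theorem measurable_starConv_indicator {M : Type*} [NonUnitalNonAssocSemiring M]
    [MeasurableSpace M] {S T : Set (Finset (Rd d))} (hS : IsCellInvariant S)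
    (hT : IsCellInvariant T) (a b : M) :
    Measurable (starConv (S.indicator fun _ => a) (T.indicator fun _ => b)) := by
  obtain ⟨κ, c, _, hc, hSc, hTc⟩ := hS.exists_common hT
  exact SwapInvariant.measurable hc ((hSc.indicator a).starConv (hTc.indicator b))

end CellInvariant

section Measurability

variable {d : ℕ} {M : Type*} [NonUnitalNonAssocRing M] [TopologicalSpace M]
  [IsTopologicalRing M] [PseudoMetrizableSpace M] [SecondCountableTopology M]
  [MeasurableSpace M] [BorelSpace M]

theorem measurable_starConv {u v : Finset (Rd d) → M} (hu : Measurable u) (hv : Measurable v) :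
    Measurable (starConv u v) := by
  have hu_ind : ∀ T, IsCellInvariant T → ∀ b : M,
      Measurable (starConv u (T.indicator fun _ => b)) := fun T hT b =>
    hu.induction_on_inter (P := fun u => Measurable (starConv u (T.indicator fun _ => b)))
      measurableSpace_eq_generateFrom_isCellInvariant isPiSystem_isCellInvariant
      isCellInvariant_univ (fun S hS a => measurable_starConv_indicator hS hT a b)
      (fun f g hf hg => starConv_add_left f g _ ▸ hf.add hg)
      (fun f g hf hfg => measurable_of_tendsto_metrizable hf
        (tendsto_pi_nhds.mpr (tendsto_starConv hfg fun _ => tendsto_const_nhds)))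
  exact hv.induction_on_inter (P := fun v => Measurable (starConv u v))
    measurableSpace_eq_generateFrom_isCellInvariant isPiSystem_isCellInvariant
    isCellInvariant_univ hu_ind
    (fun f g hf hg => starConv_add_right u f g ▸ hf.add hg)
    (fun f g hf hfg => measurable_of_tendsto_metrizable hf
      (tendsto_pi_nhds.mpr (tendsto_starConv (fun _ => tendsto_const_nhds) hfg)))

end Measurability

section KTransform

variable {d : ℕ} {M : Type*}

theorem Ktrans_eq_sum_powerset [AddCommMonoid M] [TopologicalSpace M] {G : Finset (Rd d) → M}
    {γ : Config d} {T : Finset (Rd d)} (hTγ : (T : Set (Rd d)) ⊆ γ.1)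
    (hG : ∀ η : Finset (Rd d), (η : Set (Rd d)) ⊆ γ.1 → G η ≠ 0 → η ⊆ T) :
    Ktrans G γ = ∑ η ∈ T.powerset, G η := by
  refine (tsum_subtype {η : Finset (Rd d) | (η : Set (Rd d)) ⊆ γ.1} G).trans ?_
  rw [tsum_eq_sum (s := T.powerset)]
  · refine Finset.sum_congr rfl fun η hη => Set.indicator_of_mem ?_ G
    exact (Finset.coe_subset.mpr (Finset.mem_powerset.mp hη)).trans hTγ
  · intro η hη
    by_contra hne
    have hηγ := Set.mem_of_indicator_ne_zero hne
    rw [Set.indicator_of_mem hηγ] at hne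
    exact hη (Finset.mem_powerset.mpr (hG η hηγ hne))

theorem Ktrans_starConv_eq_mul [NonUnitalNonAssocSemiring M] [TopologicalSpace M]
    {G₁ G₂ : Finset (Rd d) → M} {Λ : Set (Rd d)} (hΛ : IsCompact Λ)
    (h₁ : ∀ η, G₁ η ≠ 0 → (η : Set (Rd d)) ⊆ Λ) (h₂ : ∀ η, G₂ η ≠ 0 → (η : Set (Rd d)) ⊆ Λ)
    (γ : Config d) :
    Ktrans (starConv G₁ G₂) γ = Ktrans G₁ γ * Ktrans G₂ γ := by
  have hfin := γ.2 Λ hΛ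
  set T := hfin.toFinset
  have hTγ : (T : Set (Rd d)) ⊆ γ.1 := by simp [T]
  have hsupp : ∀ G : Finset (Rd d) → M, (∀ η, G η ≠ 0 → (η : Set (Rd d)) ⊆ Λ) →
      Ktrans G γ = ∑ η ∈ T.powerset, G η := fun G hG =>
    Ktrans_eq_sum_powerset hTγ fun η hηγ hη => by
      simpa [T, ← Finset.coe_subset] using Set.subset_inter hηγ (hG η hη)
  rw [hsupp G₁ h₁, hsupp G₂ h₂, hsupp _ fun η hη => ?_, sum_powerset_starConv]
  obtain ⟨A, B, rfl, hA, hB⟩ := exists_union_eq_of_starConv_ne_zero hη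
  simpa using Set.union_subset (h₁ A hA) (h₂ B hB)

end KTransform

theorem bddSuppC_starConv {d : ℕ} {G₁ G₂ : Finset (Rd d) → ℂ} (h₁ : BddSuppC G₁)
    (h₂ : BddSuppC G₂) : BddSuppC (starConv G₁ G₂) := by
  obtain ⟨hm₁, L₁, N₁, Λ₁, hΛ₁, hb₁, hs₁⟩ := h₁
  obtain ⟨hm₂, L₂, N₂, Λ₂, hΛ₂, hb₂, hs₂⟩ := h₂
  have hL : 0 ≤ L₁ * L₂ :=
    mul_nonneg ((norm_nonneg _).trans (hb₁ ∅)) ((norm_nonneg _).trans (hb₂ ∅))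
  have hsupp : ∀ η, starConv G₁ G₂ η ≠ 0 →
      (η : Set (Rd d)) ⊆ Λ₁ ∪ Λ₂ ∧ η.card ≤ N₁ + N₂ := by
    intro η hη
    obtain ⟨A, B, rfl, hA, hB⟩ := exists_union_eq_of_starConv_ne_zero hη
    obtain ⟨hAΛ, hAN⟩ := not_imp_comm.mp (hs₁ A) hA
    obtain ⟨hBΛ, hBN⟩ := not_imp_comm.mp (hs₂ B) hB
    exact ⟨by simpa using Set.union_subset_union hAΛ hBΛ,
      (Finset.card_union_le A B).trans (add_le_add hAN hBN)⟩
  refine ⟨measurable_starConv hm₁ hm₂, 4 ^ (N₁ + N₂) * (L₁ * L₂), N₁ + N₂, Λ₁ ∪ Λ₂,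
    hΛ₁.union hΛ₂, fun η => ?_, fun η => not_imp_comm.mp (hsupp η)⟩
  by_cases hη : starConv G₁ G₂ η = 0
  · rw [hη, norm_zero]
    positivity
  · exact (norm_starConv_le hb₁ hb₂ η).trans
      (mul_le_mul_of_nonneg_right (pow_le_pow_right₀ (by norm_num) (hsupp η hη).2) hL)

/-- For all `G₁, G₂ ∈ B_bs(Γ₀)` one has `G₁ ⋆ G₂ ∈ B_bs(Γ₀)` and
`K(G₁ ⋆ G₂) = (KG₁)·(KG₂)` as functions on `Γ`. -/
theorem Ktrans_starConv {d : ℕ} (G₁ G₂ : Finset (Rd d) → ℂ)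
    (h₁ : BddSuppC G₁) (h₂ : BddSuppC G₂) :
    BddSuppC (starConv G₁ G₂) ∧
      ∀ γ : Config d, Ktrans (starConv G₁ G₂) γ = Ktrans G₁ γ * Ktrans G₂ γ := by
  refine ⟨bddSuppC_starConv h₁ h₂, ?_⟩
  obtain ⟨-, -, N₁, Λ₁, hΛ₁, -, hs₁⟩ := h₁
  obtain ⟨-, -, N₂, Λ₂, hΛ₂, -, hs₂⟩ := h₂
  exact Ktrans_starConv_eq_mul (hΛ₁.union hΛ₂)
    (fun η hη => (not_imp_comm.mp (hs₁ η) hη).1.trans Set.subset_union_left)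
    (fun η hη => (not_imp_comm.mp (hs₂ η) hη).1.trans Set.subset_union_right)
end

section
/- Let φ be a pair potential satisfying conditions (I) and (S) with stability constant B, and let F = KG for G ∈ B_bs(Γ₀) with |G| ≤ L and G vanishing outside ⊔_{n=0}^N Γ_Λ⁽ⁿ⁾ for a compact Λ ⊂ ℝ^d. Then for every γ ∈ Γ the expression (HF)(γ) is well defined; more precisely, −(HF)(γ) = Σ_{x∈γ_Λ}(F(γ∖{x}) − F(γ)) + z∫_Λ e^{−E(x,γ)}(F(γ∪{x}) − F(γ)) dx, and the integral term is absolutely bounded by 2L e^{2B|γ|} (2 + |γ_Λ|)^N m(Λ), where m(Λ) is the Lebesgue volume of Λ. -/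
open MeasureTheory
open scoped BigOperators ENNReal Classical

/-!
Because `G` vanishes off the configurations inside `Λ` with at most `N` points, `KG(γ)` is
the finite sum of `G` over the subsets of `γ ∩ Λ` of size at most `N`, so
`|KG(γ)| ≤ L (1 + |γ_Λ|)^N`, and adding or removing a point outside `Λ` does not change
`KG`: the sum over `γ` and the integral over `ℝ^d` reduce to `γ_Λ` and `Λ`. Stability applied
to two-point configurations gives `φ ≥ -2B` away from the origin, hence
`e^{-E(x,γ)} ≤ e^{2B|γ|}` for finite `γ` and `x ∉ γ`, while for `x ∈ γ` the integrand vanishes.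
-/

open Finset

theorem Finset.card_filter_powerset_card_le_le_pow {α : Type*} (T : Finset α) (N : ℕ) :
    #{η ∈ T.powerset | η.card ≤ N} ≤ (T.card + 1) ^ N := by
  calc #{η ∈ T.powerset | η.card ≤ N}
      ≤ #((range (N + 1)).biUnion fun k => T.powersetCard k) := by
        refine card_le_card fun η hη => ?_
        simp only [mem_filter, mem_powerset] at hη
        simp only [mem_biUnion, mem_range, mem_powersetCard]
        exact ⟨η.card, Nat.lt_succ_of_le hη.2, hη.1, rfl⟩
    _ ≤ ∑ k ∈ range (N + 1), T.card.choose k :=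
        card_biUnion_le.trans_eq (by simp only [card_powersetCard])
    _ ≤ ∑ k ∈ range (N + 1), T.card ^ k * 1 ^ (N - k) * N.choose k := by
        refine sum_le_sum fun k hk => ?_
        rw [one_pow, mul_one]
        exact (Nat.choose_le_pow _ _).trans
          (Nat.le_mul_of_pos_right _ (Nat.choose_pos (Nat.lt_succ_iff.mp (mem_range.mp hk))))
    _ = (T.card + 1) ^ N := (add_pow _ _ _).symm

theorem Function.hasFiniteSupport_subtype_of_eq_zero {α M : Type*} [Zero M] {f : α → M}
    {s t : Set α} (hst : (s ∩ t).Finite) (hf : ∀ x ∈ s, x ∉ t → f x = 0) :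
    Function.HasFiniteSupport fun x : s => f x := by
  refine Set.Finite.of_finite_image (hst.subset ?_) Subtype.val_injective.injOn
  rintro _ ⟨x, hx, rfl⟩
  exact ⟨x.2, by_contra fun ht => hx (hf x x.2 ht)⟩

theorem tsum_subtype_eq_finsum_mem_inter {α M : Type*} [AddCommMonoid M] [TopologicalSpace M]
    {f : α → M} {s t : Set α} (hst : (s ∩ t).Finite) (hf : ∀ x ∈ s, x ∉ t → f x = 0) :
    ∑' x : s, f x = ∑ᶠ x ∈ s ∩ t, f x := by
  rw [tsum_eq_finsum (Function.hasFiniteSupport_subtype_of_eq_zero hst hf),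
    finsum_set_coe_eq_finsum_mem]
  refine finsum_mem_inter_support_eq _ _ _ (Set.ext fun x => ?_)
  simp only [Set.mem_inter_iff, Function.mem_support]
  exact ⟨fun ⟨hs, hx⟩ => ⟨⟨hs, by_contra fun ht => hx (hf x hs ht)⟩, hx⟩,
    fun ⟨⟨hs, _⟩, hx⟩ => ⟨hs, hx⟩⟩

section

variable {d : ℕ}

namespace Config

variable {γ : Config d} {x : Rd d} {Λ : Set (Rd d)}

theorem insertPt_of_mem (hx : x ∈ γ.1) : γ.insertPt x = γ :=
  Subtype.ext (Set.insert_eq_of_mem hx)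

theorem insertPt_inter_of_notMem (hx : x ∉ Λ) : (γ.insertPt x).1 ∩ Λ = γ.1 ∩ Λ :=
  Set.insert_inter_of_notMem hx

theorem erasePt_inter_of_notMem (hx : x ∉ Λ) : (γ.erasePt x).1 ∩ Λ = γ.1 ∩ Λ := by
  change (γ.1 \ {x}) ∩ Λ = γ.1 ∩ Λ
  rw [← Set.inter_sdiff_right_comm, Set.sdiff_singleton_eq_self fun h => hx h.2]

theorem ncard_insertPt_inter_le (hΛ : IsCompact Λ) :
    ((γ.insertPt x).1 ∩ Λ).ncard ≤ (γ.1 ∩ Λ).ncard + 1 := by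
  refine (Set.ncard_le_ncard ?_ ((γ.2 Λ hΛ).insert x)).trans (Set.ncard_insert_le _ _)
  rw [Set.insert_inter_distrib]
  exact Set.inter_subset_inter_right _ (Set.subset_insert _ _)

end Config

section KTransform

variable {M : Type*} [AddCommMonoid M] [TopologicalSpace M] {G : Finset (Rd d) → M}
  {Λ : Set (Rd d)}

theorem Ktrans_eq_sum_powerset_s14 (hG : ∀ η : Finset (Rd d), ¬(η : Set (Rd d)) ⊆ Λ → G η = 0)
    (δ : Config d) (hδ : (δ.1 ∩ Λ).Finite) :
    Ktrans G δ = ∑ η ∈ hδ.toFinset.powerset, G η := by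
  have hmem : ∀ η ∈ hδ.toFinset.powerset, (η : Set (Rd d)) ⊆ δ.1 := fun η hη x hx =>
    (hδ.mem_toFinset.mp (mem_powerset.mp hη hx)).1
  rw [Ktrans, tsum_eq_sum (s := hδ.toFinset.powerset.subtype _), sum_subtype_of_mem G hmem]
  intro η hη
  refine hG η fun hΛ => hη ?_
  rw [mem_subtype, mem_powerset]
  exact fun x hx => hδ.mem_toFinset.mpr ⟨η.2 hx, hΛ hx⟩

theorem Ktrans_congr_of_inter_eq (hG : ∀ η : Finset (Rd d), ¬(η : Set (Rd d)) ⊆ Λ → G η = 0)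
    (hΛ : IsCompact Λ) {δ δ' : Config d} (h : δ.1 ∩ Λ = δ'.1 ∩ Λ) :
    Ktrans G δ = Ktrans G δ' := by
  rw [Ktrans_eq_sum_powerset_s14 hG δ (δ.2 Λ hΛ), Ktrans_eq_sum_powerset_s14 hG δ' (δ'.2 Λ hΛ),
    Set.Finite.toFinset_inj.mpr h]

end KTransform

section BoundedSupport

variable {G : Finset (Rd d) → ℝ} {L : ℝ} {N : ℕ} {Λ : Set (Rd d)}

theorem abs_Ktrans_le (hbd : ∀ η, |G η| ≤ L)
    (hG : ∀ η : Finset (Rd d), ¬((η : Set (Rd d)) ⊆ Λ ∧ η.card ≤ N) → G η = 0)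
    (hΛ : IsCompact Λ) (δ : Config d) :
    |Ktrans G δ| ≤ L * (1 + ((δ.1 ∩ Λ).ncard : ℝ)) ^ N := by
  have hδ : (δ.1 ∩ Λ).Finite := δ.2 Λ hΛ
  have hL : 0 ≤ L := (abs_nonneg _).trans (hbd ∅)
  have hcard := card_filter_powerset_card_le_le_pow hδ.toFinset N
  rw [Ktrans_eq_sum_powerset_s14 (fun η h => hG η (h ·.1)) δ hδ]
  calc |∑ η ∈ hδ.toFinset.powerset, G η|
      ≤ ∑ η ∈ hδ.toFinset.powerset, |G η| := abs_sum_le_sum_abs _ _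
    _ = ∑ η ∈ hδ.toFinset.powerset with η.card ≤ N, |G η| := by
        refine (sum_filter_of_ne fun η _ hGη => by_contra fun hN => hGη ?_).symm
        rw [hG η (hN ·.2), abs_zero]
    _ ≤ #{η ∈ hδ.toFinset.powerset | η.card ≤ N} • L := sum_le_card_nsmul _ _ _ fun η _ => hbd η
    _ ≤ L * (1 + ((δ.1 ∩ Λ).ncard : ℝ)) ^ N := by
        rw [nsmul_eq_mul, mul_comm, Set.ncard_eq_toFinset_card _ hδ, add_comm (1 : ℝ)]
        exact mul_le_mul_of_nonneg_left (by exact_mod_cast hcard) hL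

theorem abs_Ktrans_insertPt_sub_le (hbd : ∀ η, |G η| ≤ L)
    (hG : ∀ η : Finset (Rd d), ¬((η : Set (Rd d)) ⊆ Λ ∧ η.card ≤ N) → G η = 0)
    (hΛ : IsCompact Λ) (γ : Config d) (x : Rd d) :
    |Ktrans G (γ.insertPt x) - Ktrans G γ| ≤ 2 * L * (2 + ((γ.1 ∩ Λ).ncard : ℝ)) ^ N := by
  have hL : 0 ≤ L := (abs_nonneg _).trans (hbd ∅)
  have hm : (((γ.insertPt x).1 ∩ Λ).ncard : ℝ) ≤ (γ.1 ∩ Λ).ncard + 1 := by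
    exact_mod_cast Config.ncard_insertPt_inter_le hΛ
  have hpow (k : ℝ) (hk : k ≤ (γ.1 ∩ Λ).ncard + 1) (hk0 : 0 ≤ k) :
      L * (1 + k) ^ N ≤ L * (2 + ((γ.1 ∩ Λ).ncard : ℝ)) ^ N :=
    mul_le_mul_of_nonneg_left (pow_le_pow_left₀ (by linarith) (by linarith) N) hL
  calc |Ktrans G (γ.insertPt x) - Ktrans G γ|
      ≤ |Ktrans G (γ.insertPt x)| + |Ktrans G γ| := abs_sub _ _
    _ ≤ L * (2 + ((γ.1 ∩ Λ).ncard : ℝ)) ^ N + L * (2 + ((γ.1 ∩ Λ).ncard : ℝ)) ^ N :=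
        add_le_add ((abs_Ktrans_le hbd hG hΛ _).trans (hpow _ hm (by positivity)))
          ((abs_Ktrans_le hbd hG hΛ _).trans (hpow _ (by linarith) (by positivity)))
    _ = 2 * L * (2 + ((γ.1 ∩ Λ).ncard : ℝ)) ^ N := by ring

end BoundedSupport

section Stability

variable {V : PairPotential d} {B : ℝ}

theorem pairEnergy_pair {a b : Rd d} (hab : a ≠ b) :
    pairEnergy V {a, b} = (V.toFun (a - b)).toReal := by
  have hba : V.toFun (b - a) = V.toFun (a - b) := by rw [← neg_sub, V.symm']
  rw [pairEnergy, sum_pair hab, erase_insert (notMem_singleton.mpr hab),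
    erase_insert_of_ne hab, erase_singleton, insert_empty, sum_singleton, sum_singleton, hba]
  ring

theorem Stable.neg_two_mul_le_toReal (hS : Stable V B) {a : Rd d} (ha : a ≠ 0) :
    -(2 * B) ≤ (V.toFun a).toReal := by
  have h := hS.2 {a, 0}
  rw [pairEnergy_pair ha, sub_zero, card_pair ha] at h
  push_cast at h
  linarith

theorem expNegRelEnergy_nonneg (V : PairPotential d) (x : Rd d) (γ : Set (Rd d)) :
    0 ≤ expNegRelEnergy V x γ := by
  unfold expNegRelEnergy
  split_ifs
  exacts [(Real.exp_pos _).le, le_rfl]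

theorem Stable.expNegRelEnergy_le (hS : Stable V B) {γ : Set (Rd d)} (hγ : γ.Finite)
    {x : Rd d} (hx : x ∉ γ) : expNegRelEnergy V x γ ≤ Real.exp (2 * B * γ.ncard) := by
  unfold expNegRelEnergy
  split_ifs
  · have := hγ.fintype
    refine Real.exp_le_exp.mpr (neg_le.mp ?_)
    have h := card_nsmul_le_sum univ (fun y : γ => (V.toFun (x - y)).toReal) (-(2 * B))
      fun y _ => hS.neg_two_mul_le_toReal (sub_ne_zero.mpr fun h => hx (h ▸ y.2))
    rw [card_univ, ← Nat.card_eq_fintype_card, Nat.card_coe_set_eq, nsmul_eq_mul] at h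
    rw [tsum_fintype]
    linarith
  · exact (Real.exp_pos _).le

end Stability

theorem ofReal_abs_expNegRelEnergy_mul_Ktrans_sub_le {V : PairPotential d} {B : ℝ}
    (hS : Stable V B) {G : Finset (Rd d) → ℝ} {L : ℝ} {N : ℕ} {Λ : Set (Rd d)}
    (hbd : ∀ η, |G η| ≤ L)
    (hG : ∀ η : Finset (Rd d), ¬((η : Set (Rd d)) ⊆ Λ ∧ η.card ≤ N) → G η = 0)
    (hΛ : IsCompact Λ) (γ : Config d) (x : Rd d) :
    ENNReal.ofReal |expNegRelEnergy V x γ.1 * (Ktrans G (γ.insertPt x) - Ktrans G γ)| ≤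
      (if γ.1.Finite then ENNReal.ofReal (Real.exp (2 * B * γ.1.ncard)) else ⊤) *
        ENNReal.ofReal (2 * L * (2 + ((γ.1 ∩ Λ).ncard : ℝ)) ^ N) := by
  by_cases hx : x ∈ γ.1
  · simp [Config.insertPt_of_mem hx]
  rw [abs_mul, abs_of_nonneg (expNegRelEnergy_nonneg V x γ.1),
    ENNReal.ofReal_mul (expNegRelEnergy_nonneg V x γ.1)]
  refine mul_le_mul' ?_ (ENNReal.ofReal_le_ofReal (abs_Ktrans_insertPt_sub_le hbd hG hΛ γ x))
  split_ifs with hγ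
  exacts [ENNReal.ofReal_le_ofReal (hS.expNegRelEnergy_le hγ hx), le_top]

end

theorem glauber_welldefined_general {d : ℕ} (V : PairPotential d) (B : ℝ)
    (hS : Stable V B) (z : ℝ)
    (G : Finset (Rd d) → ℝ) (L : ℝ) (N : ℕ)
    (Λ : Set (Rd d)) (hΛ : IsCompact Λ)
    (hbd : ∀ η, |G η| ≤ L)
    (hsupp : ∀ η : Finset (Rd d), ¬((η : Set (Rd d)) ⊆ Λ ∧ η.card ≤ N) → G η = 0)
    (γ : Config d) :
    Summable (fun x : γ.1 => Ktrans G (γ.erasePt x) - Ktrans G γ) ∧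
      -(glauber V z (Ktrans G) γ) =
        (∑ᶠ x ∈ γ.1 ∩ Λ, (Ktrans G (γ.erasePt x) - Ktrans G γ)) +
          z * ∫ x in Λ, expNegRelEnergy V x γ.1 *
            (Ktrans G (γ.insertPt x) - Ktrans G γ) ∧
      ∫⁻ x in Λ, ENNReal.ofReal
          |expNegRelEnergy V x γ.1 * (Ktrans G (γ.insertPt x) - Ktrans G γ)| ≤
        ENNReal.ofReal (2 * L) *
          (if γ.1.Finite then ENNReal.ofReal (Real.exp (2 * B * γ.1.ncard)) else ⊤) *
          ENNReal.ofReal ((2 + ((γ.1 ∩ Λ).ncard : ℝ)) ^ N) * volume Λ := by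
  have hG : ∀ η : Finset (Rd d), ¬(η : Set (Rd d)) ⊆ Λ → G η = 0 := fun η h => hsupp η (h ·.1)
  have herase (x) (_ : x ∈ γ.1) (hx : x ∉ Λ) : Ktrans G (γ.erasePt x) - Ktrans G γ = 0 :=
    sub_eq_zero.mpr (Ktrans_congr_of_inter_eq hG hΛ (Config.erasePt_inter_of_notMem hx))
  have hinsert (x) (hx : x ∉ Λ) :
      expNegRelEnergy V x γ.1 * (Ktrans G (γ.insertPt x) - Ktrans G γ) = 0 := by
    rw [Ktrans_congr_of_inter_eq hG hΛ (Config.insertPt_inter_of_notMem hx), sub_self, mul_zero]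
  refine ⟨summable_of_hasFiniteSupport
    (Function.hasFiniteSupport_subtype_of_eq_zero (γ.2 Λ hΛ) herase), ?_, ?_⟩
  · rw [glauber, neg_neg, tsum_subtype_eq_finsum_mem_inter (γ.2 Λ hΛ) herase,
      setIntegral_eq_integral_of_forall_compl_eq_zero hinsert]
  · calc _ ≤ ∫⁻ _ in Λ, (if γ.1.Finite then ENNReal.ofReal (Real.exp (2 * B * γ.1.ncard)) else ⊤) *
            ENNReal.ofReal (2 * L * (2 + ((γ.1 ∩ Λ).ncard : ℝ)) ^ N) :=
          lintegral_mono (ofReal_abs_expNegRelEnergy_mul_Ktrans_sub_le hS hbd hsupp hΛ γ)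
      _ = _ := by
          rw [setLIntegral_const, ENNReal.ofReal_mul' (by positivity)]
          ring

/-- For a pair potential satisfying (I) and (S) with stability constant `B`, and
`F = KG` with `G ∈ B_bs(Γ₀)`, `|G| ≤ L`, `G` vanishing outside `⊔_{n≤N} Γ_Λ⁽ⁿ⁾`:
`(HF)(γ)` is well defined for every `γ ∈ Γ`; more precisely
`-(HF)(γ) = Σ_{x∈γ_Λ}(F(γ∖{x})-F(γ)) + z ∫_Λ e^{-E(x,γ)}(F(γ∪{x})-F(γ)) dx`,
and the integral term is absolutely bounded by `2L e^{2B|γ|}(2+|γ_Λ|)^N m(Λ)`. -/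
theorem glauber_welldefined {d : ℕ} (V : PairPotential d) (B : ℝ)
    (hS : Stable V B) (hI : CondI V) (z : ℝ) (hz : 0 < z)
    (G : Finset (Rd d) → ℝ) (hGm : Measurable G) (L : ℝ) (hL : 0 ≤ L) (N : ℕ)
    (Λ : Set (Rd d)) (hΛ : IsCompact Λ)
    (hbd : ∀ η, |G η| ≤ L)
    (hsupp : ∀ η : Finset (Rd d), ¬((η : Set (Rd d)) ⊆ Λ ∧ η.card ≤ N) → G η = 0)
    (γ : Config d) :
    Summable (fun x : γ.1 => Ktrans G (γ.erasePt x) - Ktrans G γ) ∧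
      -(glauber V z (Ktrans G) γ) =
        (∑ᶠ x ∈ γ.1 ∩ Λ, (Ktrans G (γ.erasePt x) - Ktrans G γ)) +
          z * ∫ x in Λ, expNegRelEnergy V x γ.1 *
            (Ktrans G (γ.insertPt x) - Ktrans G γ) ∧
      ∫⁻ x in Λ, ENNReal.ofReal
          |expNegRelEnergy V x γ.1 * (Ktrans G (γ.insertPt x) - Ktrans G γ)| ≤
        ENNReal.ofReal (2 * L) *
          (if γ.1.Finite then ENNReal.ofReal (Real.exp (2 * B * γ.1.ncard)) else ⊤) *
          ENNReal.ofReal ((2 + ((γ.1 ∩ Λ).ncard : ℝ)) ^ N) * volume Λ :=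
  glauber_welldefined_general V B hS z G L N Λ hΛ hbd hsupp γ
end
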